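/- arXiv:1805.05196 — 2 statements merged into one kernel-verified Lean document; each statement's English description precedes it below -/
import Mathlib

section
/- For positive integers a, b, c with a+b+c=n and b ≤ c, let p(a,b,c) be the permutation defined by p_i = n+1-i for 1 ≤ i ≤ a, p_i = a+b+1-i for a+1 ≤ i ≤ a+b, and p_i = n+b+1-i for a+b+1 ≤ i ≤ n. If p(a,b,c) is a cyclic permutation, then: if n is even, a = n/2 or a = n/2 - 1; if n is odd, a = (n-1)/2. -/
/-!
The block of positions `b + c, …, a - 1` is reversed in place by `p`, so a cyclic `p` forces
`a ≤ b + c`. For the upper bound, read the positions `≥ a` modulo `M = b + c`: the first return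
map of `p` to them becomes `u ↦ S (a + b - 1 - u)` on `ZMod M`, where the involution `S` reverses
the residues `0, …, a - 1` and fixes the others. Since `p` is an `n`-cycle, every residue lies in
the orbit of `a` under this map. Being a product of two involutions, the map is reversed by `S`,
and an involution reversing a cycle fixes at most two of its points; but `S` fixes
`a, …, b + c - 1`. Hence `b + c ≤ a + 2`, and `n = a + (b + c)` gives the claim.
-/

/-- A permutation of {1,...,n} is cyclic (a single n-cycle) iff it acts transitively. -/
def IsCyclicPerm {n : ℕ} (p : Equiv.Perm (Fin n)) : Prop :=
  ∀ x y : Fin n, ∃ m : ℕ, (p ^ m) x = y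

/-- `p` contains the pattern `q` (given as a word `q 0, q 1, ...`). -/
def Contains {n k : ℕ} (p : Equiv.Perm (Fin n)) (q : Fin k → Fin k) : Prop :=
  ∃ f : Fin k → Fin n, StrictMono f ∧ ∀ i j : Fin k, q i < q j ↔ p (f i) < p (f j)

def Avoids {n k : ℕ} (p : Equiv.Perm (Fin n)) (q : Fin k → Fin k) : Prop :=
  ¬ Contains p q

def pat123 : Fin 3 → Fin 3 := ![0, 1, 2]
def pat231 : Fin 3 → Fin 3 := ![1, 2, 0]
def pat132 : Fin 3 → Fin 3 := ![0, 2, 1]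
def pat321 : Fin 3 → Fin 3 := ![2, 1, 0]
def pat312 : Fin 3 → Fin 3 := ![2, 0, 1]

/-- `p` is the three-layer permutation of the triple `(a,b,c)`, in 0-based form:
`p_i = n+1-i` for `1 ≤ i ≤ a`, `p_i = a+b+1-i` for `a+1 ≤ i ≤ a+b`,
`p_i = n+b+1-i` for `a+b+1 ≤ i ≤ n` (1-based). -/
def IsTriplePerm (n a b : ℕ) (p : Equiv.Perm (Fin n)) : Prop :=
  ∀ i : Fin n, (p i : ℕ) =
    if (i : ℕ) < a then n - 1 - (i : ℕ)
    else if (i : ℕ) < a + b then a + b - 1 - (i : ℕ)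
    else n + b - 1 - (i : ℕ)

open Equiv

theorem Nat.two_mul_mod_eq_of_dvd_two_mul {T i : ℕ} (h2i : T ∣ 2 * i) (hi : ¬ T ∣ i) :
    2 * (i % T) = T := by
  have hT : 0 < T := Nat.pos_of_ne_zero (by rintro rfl; simp_all)
  have hr : i % T ≠ 0 := fun h => hi (Nat.dvd_of_mod_eq_zero h)
  have hdvd : T ∣ 2 * (i % T) := by
    have : 2 * i = 2 * (i % T) + T * (2 * (i / T)) := by
      rw [mul_left_comm]; have := Nat.mod_add_div i T; omega
    exact (Nat.dvd_add_left (Dvd.intro _ rfl)).mp (this ▸ h2i)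
  obtain ⟨w, hw⟩ := hdvd
  have : w < 2 := by nlinarith [Nat.mod_lt i hT]
  interval_cases w <;> omega

theorem semiconjBy_mul_inv_of_mul_self {G : Type*} [Group G] {s r : G} (hs : s * s = 1)
    (hr : r * r = 1) : SemiconjBy s (s * r) (s * r)⁻¹ := by
  rw [SemiconjBy, mul_inv_rev, inv_eq_of_mul_eq_one_left hs, inv_eq_of_mul_eq_one_left hr,
    ← mul_assoc, hs, mul_assoc, hs, one_mul, mul_one]

namespace Equiv.Perm

variable {α : Type*}

theorem eq_of_isFixedPt_of_semiconjBy_inv {q S : Perm α} (hS : SemiconjBy S q q⁻¹) {x y z : α}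
    (hx : S x = x) (hy : S y = y) (hz : S z = z) (hxy : x ≠ y) (hxz : x ≠ z)
    (hqy : ∃ i : ℕ, (q ^ i) x = y) (hqz : ∃ j : ℕ, (q ^ j) x = z) : y = z := by
  have period_dvd : ∀ i : ℕ, S ((q ^ i) x) = (q ^ i) x →
      MulAction.period q x ∣ 2 * i := by
    -- `S` fixes `x` and reverses `q`, so a fixed point `(q ^ i) x` of `S` is also `(q ^ i)⁻¹ x`.
    intro i hi
    have hinv := DFunLike.congr_fun (hS.pow_right i).eq x
    rw [mul_apply, mul_apply, hi, hx, inv_pow] at hinv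
    rw [← MulAction.pow_smul_eq_iff_period_dvd, two_mul, pow_add, mul_smul, Perm.smul_def,
      Perm.smul_def, hinv, ← mul_apply, mul_inv_cancel, one_apply]
  obtain ⟨i, rfl⟩ := hqy
  obtain ⟨j, rfl⟩ := hqz
  have not_dvd : ∀ k : ℕ, x ≠ (q ^ k) x → ¬ MulAction.period q x ∣ k := fun k hk hdvd =>
    hk (MulAction.pow_smul_eq_iff_period_dvd.mpr hdvd).symm
  have hij : i % MulAction.period q x = j % MulAction.period q x := by
    have := Nat.two_mul_mod_eq_of_dvd_two_mul (period_dvd i hy) (not_dvd i hxy)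
    have := Nat.two_mul_mod_eq_of_dvd_two_mul (period_dvd j hz) (not_dvd j hxz)
    omega
  rw [← Perm.smul_def, ← Perm.smul_def, ← MulAction.pow_mod_period_smul i, hij,
    MulAction.pow_mod_period_smul]

theorem exists_pow_apply_eq_of_firstReturn {β : Type*} (p : Perm β) (g : Perm α) (s : Set β)
    (f : β → α) (hs : ∀ x ∉ s, p x ∈ s)
    (hin : ∀ x ∈ s, p x ∈ s → f (p x) = g (f x))
    (hout : ∀ x ∈ s, p x ∉ s → f (p (p x)) = g (f x)) (k : ℕ) {x : β} (hx : x ∈ s)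
    (hk : (p ^ k) x ∈ s) : ∃ j : ℕ, (g ^ j) (f x) = f ((p ^ k) x) := by
  induction k using Nat.strong_induction_on generalizing x with
  | _ k ih =>
    match k with
    | 0 => exact ⟨0, rfl⟩
    | k + 1 =>
      rw [pow_succ, mul_apply] at hk ⊢
      by_cases hpx : p x ∈ s
      · obtain ⟨j, hj⟩ := ih k k.lt_succ_self hpx hk
        exact ⟨j + 1, by rw [← hj, hin x hx hpx, pow_succ, mul_apply]⟩
      · match k with
        | 0 => exact absurd hk hpx
        | k + 1 =>
          rw [pow_succ, mul_apply] at hk ⊢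
          obtain ⟨j, hj⟩ := ih k (by omega) (hs _ hpx) hk
          exact ⟨j + 1, by rw [← hj, hout x hx hpx, pow_succ, mul_apply]⟩

end Equiv.Perm

theorem IsCyclicPerm.mem_of_mapsTo {n : ℕ} {p : Perm (Fin n)} (hcyc : IsCyclicPerm p)
    {s : Set (Fin n)} (hs : Set.MapsTo p s s) {x : Fin n} (hx : x ∈ s) (y : Fin n) : y ∈ s := by
  obtain ⟨m, rfl⟩ := hcyc x y
  rw [← Perm.iterate_eq_pow]
  exact hs.iterate m hx

def reflectBelow (a M : ℕ) (v : ZMod M) : ZMod M :=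
  if v.val < a then ((a - 1 - v.val : ℕ) : ZMod M) else v

section reflectBelow

variable {a M : ℕ}

theorem reflectBelow_natCast_of_le {v : ℕ} (hav : a ≤ v) (hvM : v < M) :
    reflectBelow a M v = v := by
  rw [reflectBelow, if_neg (by rw [ZMod.val_cast_of_lt hvM]; omega)]

theorem reflectBelow_natCast_of_lt {v : ℕ} (hva : v < a) (haM : a ≤ M) :
    reflectBelow a M v = ((a - 1 - v : ℕ) : ZMod M) := by
  rw [reflectBelow, ZMod.val_cast_of_lt (by omega), if_pos hva]

theorem reflectBelow_involutive [NeZero M] (haM : a ≤ M) :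
    Function.Involutive (reflectBelow a M) := by
  intro v
  by_cases hv : v.val < a
  · have hv' : reflectBelow a M v = ((a - 1 - v.val : ℕ) : ZMod M) := if_pos hv
    rw [hv', reflectBelow_natCast_of_lt (by omega) haM, Nat.sub_sub_self (by omega),
      ZMod.natCast_zmod_val]
  · have hv' : reflectBelow a M v = v := if_neg hv
    rw [hv', hv']

end reflectBelow

namespace IsTriplePerm

variable {n a b c : ℕ} {p : Perm (Fin n)}

theorem apply_of_lt (hp : IsTriplePerm n a b p) {x : Fin n} (hx : (x : ℕ) < a) :
    (p x : ℕ) = n - 1 - x := by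
  simpa [hx] using hp x

theorem apply_lt_of_le (hp : IsTriplePerm n a b p) (habc : a + b + c = n) {x : Fin n}
    (hx : a ≤ (x : ℕ)) : (p x : ℕ) < b + c := by
  have := hp x
  split_ifs at this <;> omega

theorem natCast_apply_of_le (hp : IsTriplePerm n a b p) (habc : a + b + c = n) {x : Fin n}
    (hx : a ≤ (x : ℕ)) :
    ((p x : ℕ) : ZMod (b + c)) = (a + b : ZMod (b + c)) - 1 - (x : ℕ) := by
  have hpx := hp x
  rw [if_neg (by omega)] at hpx
  split_ifs at hpx with hxb
  · have h : (p x : ℕ) + x + 1 = a + b := by omega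
    have h := congrArg (Nat.cast : ℕ → ZMod (b + c)) h
    push_cast at h
    linear_combination h
  · have h : (p x : ℕ) + x + 1 = a + b + (b + c) := by omega
    have h := congrArg (Nat.cast : ℕ → ZMod (b + c)) h
    have hM : ((b + c : ℕ) : ZMod (b + c)) = 0 := ZMod.natCast_self _
    push_cast at h hM
    linear_combination h + hM

theorem natCast_apply_of_le_of_le (hp : IsTriplePerm n a b p) (habc : a + b + c = n)
    {x : Fin n} (hx : a ≤ (x : ℕ)) (hpx : a ≤ (p x : ℕ)) :
    ((p x : ℕ) : ZMod (b + c)) =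
      reflectBelow a (b + c) ((a + b : ZMod (b + c)) - 1 - (x : ℕ)) := by
  rw [← hp.natCast_apply_of_le habc hx,
    reflectBelow_natCast_of_le hpx (hp.apply_lt_of_le habc hx)]

theorem natCast_apply_apply_of_le_of_lt (hp : IsTriplePerm n a b p) (habc : a + b + c = n)
    (ha : a ≤ b + c) {x : Fin n} (hx : a ≤ (x : ℕ)) (hpx : (p x : ℕ) < a) :
    ((p (p x) : ℕ) : ZMod (b + c)) =
      reflectBelow a (b + c) ((a + b : ZMod (b + c)) - 1 - (x : ℕ)) := by
  rw [← hp.natCast_apply_of_le habc hx, reflectBelow_natCast_of_lt hpx ha,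
    hp.apply_of_lt hpx, show n - 1 - (p x : ℕ) = a - 1 - p x + (b + c) by omega, Nat.cast_add,
    ZMod.natCast_self, add_zero]

theorem le_add_of_isCyclicPerm (hp : IsTriplePerm n a b p) (habc : a + b + c = n)
    (hbc : 0 < b + c) (hcyc : IsCyclicPerm p) : a ≤ b + c := by
  by_contra! h
  have hmaps : Set.MapsTo p {x | b + c ≤ (x : ℕ) ∧ (x : ℕ) < a}
      {x | b + c ≤ (x : ℕ) ∧ (x : ℕ) < a} := by
    rintro x ⟨hx₁, hx₂⟩
    have := hp.apply_of_lt hx₂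
    constructor <;> omega
  have := hcyc.mem_of_mapsTo hmaps (x := ⟨b + c, by omega⟩) ⟨le_rfl, h⟩ ⟨0, by omega⟩
  exact absurd this.1 (by simp only [not_le]; omega)

theorem add_le_of_isCyclicPerm (hp : IsTriplePerm n a b p) (habc : a + b + c = n)
    (hcyc : IsCyclicPerm p) : b + c ≤ a + 2 := by
  by_contra! h
  have : NeZero (b + c) := ⟨by omega⟩
  let S := (reflectBelow_involutive (a := a) (M := b + c) (by omega)).toPerm
  let R := Equiv.subLeft ((a + b : ZMod (b + c)) - 1)
  have hS : SemiconjBy S (S * R) (S * R)⁻¹ := semiconjBy_mul_inv_of_mul_self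
    (Equiv.ext (reflectBelow_involutive (by omega))) (Equiv.ext (sub_sub_cancel _))
  have horbit : ∀ v, a ≤ v → v < b + c →
      ∃ j : ℕ, ((S * R) ^ j) (a : ZMod (b + c)) = (v : ZMod (b + c)) := by
    intro v hav hv
    obtain ⟨k, hk⟩ := hcyc ⟨a, by omega⟩ ⟨v, by omega⟩
    have := Perm.exists_pow_apply_eq_of_firstReturn p (S * R) {x | a ≤ (x : ℕ)}
      (fun x => ((x : ℕ) : ZMod (b + c))) ?_ ?_ ?_ k (x := ⟨a, by omega⟩)
      (le_refl a) (by rw [hk]; exact hav)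
    · simpa [hk] using this
    · intro x hx
      replace hx : (x : ℕ) < a := not_le.mp hx
      have := hp.apply_of_lt hx
      show a ≤ (p x : ℕ)
      omega
    · exact fun x hx hpx => hp.natCast_apply_of_le_of_le habc hx hpx
    · exact fun x hx hpx =>
        hp.natCast_apply_apply_of_le_of_lt habc (by omega) hx (not_le.mp hpx)
  have hne : ∀ u v : ℕ, u < b + c → v < b + c → u ≠ v → (u : ZMod (b + c)) ≠ v :=
    fun u v hu hv huv => by
      rwa [Ne, ZMod.natCast_eq_natCast_iff', Nat.mod_eq_of_lt hu, Nat.mod_eq_of_lt hv]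
  refine hne (a + 1) (a + 2) (by omega) (by omega) (by omega) ?_
  exact Perm.eq_of_isFixedPt_of_semiconjBy_inv hS (reflectBelow_natCast_of_le le_rfl (by omega))
    (reflectBelow_natCast_of_le (by omega) (by omega))
    (reflectBelow_natCast_of_le (by omega) (by omega))
    (hne _ _ (by omega) (by omega) (by omega)) (hne _ _ (by omega) (by omega) (by omega))
    (horbit _ (by omega) (by omega)) (horbit _ (by omega) (by omega))

end IsTriplePerm

theorem stmt7_general (n a b c : ℕ) (hb : 0 < b)
    (habc : a + b + c = n) (p : Equiv.Perm (Fin n))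
    (hp : IsTriplePerm n a b p) (hcyc : IsCyclicPerm p) :
    (Even n → a = n / 2 ∨ a = n / 2 - 1) ∧ (Odd n → a = (n - 1) / 2) := by
  have hle := hp.le_add_of_isCyclicPerm habc (by omega) hcyc
  have hge := hp.add_le_of_isCyclicPerm habc hcyc
  refine ⟨fun he => ?_, fun ho => ?_⟩
  · rw [Nat.even_iff] at he
    omega
  · rw [Nat.odd_iff] at ho
    omega

theorem stmt7 (n a b c : ℕ) (ha : 0 < a) (hb : 0 < b) (hc : 0 < c)
    (hbc : b ≤ c) (habc : a + b + c = n) (p : Equiv.Perm (Fin n))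
    (hp : IsTriplePerm n a b p) (hcyc : IsCyclicPerm p) :
    (Even n → a = n / 2 ∨ a = n / 2 - 1) ∧ (Odd n → a = (n - 1) / 2) :=
  stmt7_general n a b c hb habc p hp hcyc
end

section
/- Let a, b, c be positive integers with a ≥ b, a ≥ c, a = 2K, b + c = 2K + 2, both b and c even, and gcd(b,c) = 2, and let n = a + b + c. Then the permutation p(a,b,c) defined by p_i = n+1-i for 1 ≤ i ≤ a, p_i = a+b+1-i for a+1 ≤ i ≤ a+b, and p_i = n+b+1-i for a+b+1 ≤ i ≤ n, is a cyclic permutation. -/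
/-! The square of `p` rotates the block `{0, …, a + 1}` by `b` and the block `{a, …, n - 1}`
by `c`, modulo `b + c = a + 2`, except at one pair of adjacent points in each block. As
`gcd (b / 2) (c / 2) = 1`, each rotation has the two parity classes of its block as orbits, and
deleting one edge from each of these cycles leaves a path, so points of equal parity in a block lie
in one cycle of `p`. The blocks share `a` and `a + 1`, and `p 0 = n - 1` joins the two parities. -/

open Equiv

theorem Nat.add_two_mul_mod_two_mul {r y m : ℕ} (hr : r < 2) :
    (r + 2 * y) % (2 * m) = r + 2 * (y % m) := by
  rw [Nat.mod_mul, show (r + 2 * y) / 2 = y by omega]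
  omega

theorem Nat.mod_eq_sub_of_le_of_lt_two_mul {x m : ℕ} (h₁ : m ≤ x) (h₂ : x < 2 * m) :
    x % m = x - m := by
  rw [Nat.mod_eq_sub_mod h₁, Nat.mod_eq_of_lt (by omega)]

theorem Equiv.Perm.sameCycle_of_sameCycle_add {α : Type*} {σ : Perm α} {m : ℕ} [NeZero m]
    {g : ZMod m} (hg : IsUnit g) {v₀ : ZMod m} {f : ZMod m → α}
    (hstep : ∀ u, u ≠ v₀ → σ.SameCycle (f u) (f (u + g))) (u v : ZMod m) :
    σ.SameCycle (f u) (f v) := by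
  have chain : ∀ k < m, σ.SameCycle (f (v₀ + g)) (f (v₀ + ((k + 1 : ℕ) : ZMod m) * g)) := by
    intro k hk
    induction k with
    | zero => simpa using Perm.SameCycle.rfl
    | succ k ih =>
      have hne : v₀ + ((k + 1 : ℕ) : ZMod m) * g ≠ v₀ := by
        rw [Ne, add_eq_left, hg.mul_left_eq_zero, ZMod.natCast_eq_zero_iff]
        exact fun h => by have := Nat.le_of_dvd k.succ_pos h; omega
      refine (ih (by omega)).trans ?_
      convert hstep _ hne using 2
      push_cast
      ring
  have reach : ∀ w, σ.SameCycle (f (v₀ + g)) (f w) := by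
    intro w
    convert chain ((w - v₀) * ↑hg.unit⁻¹ - 1).val (ZMod.val_lt _)
    rw [Nat.cast_add, ZMod.natCast_zmod_val, Nat.cast_one, sub_add_cancel, mul_assoc,
      hg.val_inv_mul, mul_one, add_sub_cancel]
  exact (reach u).symm.trans (reach v)

theorem Equiv.Perm.sameCycle_of_sq_apply_eq {n s m g e : ℕ} {σ : Perm (Fin n)}
    (hg : g.Coprime m) (hsn : s + 2 * m ≤ n)
    (hsq : ∀ x : Fin n, s ≤ x → (x : ℕ) < s + 2 * m → (x - s) / 2 ≠ e →
      ((σ ^ 2) x : ℕ) = s + (x - s + 2 * g) % (2 * m))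
    {x y : Fin n} (hx : s ≤ x) (hxm : x < s + 2 * m) (hy : s ≤ y) (hym : y < s + 2 * m)
    (hxy : (x : ℕ) % 2 = y % 2) : σ.SameCycle x y := by
  have : NeZero m := ⟨by omega⟩
  set r := ((x : ℕ) - s) % 2
  let f : ZMod m → Fin n := fun u => ⟨s + r + 2 * u.val, by have := u.val_lt; omega⟩
  have hf : ∀ z : Fin n, s ≤ z → z < s + 2 * m → (z - s) % 2 = r →
      f (((z - s) / 2 : ℕ) : ZMod m) = z := by
    intro z h₁ h₂ h₃
    ext
    simp only [f, ZMod.val_natCast, Nat.mod_eq_of_lt (by omega : (z - s) / 2 < m)]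
    omega
  rw [← hf x hx hxm rfl, ← hf y hy hym (by omega)]
  refine sameCycle_of_sameCycle_add ((ZMod.isUnit_iff_coprime g m).2 hg) (v₀ := e)
    (fun u hu => ?_) _ _
  have hue : u.val ≠ e := fun h => hu (by rw [← h, ZMod.natCast_zmod_val])
  suffices f (u + g) = (σ ^ 2) (f u) from this ▸ sameCycle_pow_right.2 .rfl
  ext
  have := u.val_lt
  rw [hsq _ (by simp only [f]; omega) (by simp only [f]; omega) (by simp only [f]; omega)]
  simp only [f, ZMod.val_add, ZMod.val_natCast, Nat.add_mod_mod]
  rw [show s + r + 2 * u.val - s + 2 * g = r + 2 * (u.val + g) by omega,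
    Nat.add_two_mul_mod_two_mul (Nat.mod_lt _ two_pos)]
  omega

theorem exists_isTriplePerm {n a b : ℕ} (h : a + b ≤ n) :
    ∃ p : Perm (Fin n), IsTriplePerm n a b p := by
  let F : Fin n → Fin n := fun i =>
    ⟨if (i : ℕ) < a then n - 1 - i else if (i : ℕ) < a + b then a + b - 1 - i else n + b - 1 - i,
      by split_ifs <;> omega⟩
  have hF : F.Injective := fun i j hij => by
    have := congrArg Fin.val hij
    simp only [F] at this
    ext
    split_ifs at this <;> omega
  exact ⟨.ofBijective F hF.bijective_of_finite, fun _ => rfl⟩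

namespace IsTriplePerm

variable {n a b c : ℕ} {p : Perm (Fin n)}

theorem sq_apply_of_lt (hp : IsTriplePerm n a b p) (hn : n = a + b + c) (habc : a ≤ b + c)
    {x : Fin n} (hx : (x : ℕ) < a) : ((p ^ 2) x : ℕ) = (x + b) % (b + c) := by
  rw [sq, Perm.mul_apply, hp, hp x]
  rcases lt_or_ge ((x : ℕ) + b) (b + c) with h | h
  · rw [Nat.mod_eq_of_lt h]
    split_ifs <;> omega
  · rw [Nat.mod_eq_sub_of_le_of_lt_two_mul h (by omega)]
    split_ifs <;> omega

theorem sq_apply_of_le (hp : IsTriplePerm n a b p) (hn : n = a + b + c) (hba : b ≤ a)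
    (habc : a ≤ b + c)
    {x : Fin n} (hx : a ≤ x) (hx' : (x : ℕ) < a + b ∨ 2 * b + c ≤ x) :
    ((p ^ 2) x : ℕ) = a + (x - a + c) % (b + c) := by
  rw [sq, Perm.mul_apply, hp, hp x]
  rcases lt_or_ge ((x : ℕ) - a + c) (b + c) with h | h
  · rw [Nat.mod_eq_of_lt h]
    split_ifs <;> omega
  · rw [Nat.mod_eq_sub_of_le_of_lt_two_mul h (by omega)]
    split_ifs <;> omega

end IsTriplePerm

theorem IsTriplePerm.sameCycle_of_mod_two_eq {n a b c b' c' : ℕ} {p : Perm (Fin n)}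
    (hp : IsTriplePerm n a b p) (hn : n = a + b + c) (hba : b ≤ a) (habc : a + 2 = b + c)
    (hb : b = 2 * b') (hc : c = 2 * c') (hcop : b'.Coprime c') {x y : Fin n}
    (hxy : (x : ℕ) % 2 = y % 2) : p.SameCycle x y := by
  have low : ∀ x y : Fin n, (x : ℕ) < a + 2 → (y : ℕ) < a + 2 → (x : ℕ) % 2 = y % 2 →
      p.SameCycle x y := by
    refine fun x y hx hy => p.sameCycle_of_sq_apply_eq (s := 0) (m := b' + c') (e := b' + c' - 1)
      (Nat.coprime_self_add_right.2 hcop) (by omega) (fun z _ hz hze => ?_) (Nat.zero_le _)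
      (by omega) (Nat.zero_le _) (by omega)
    rw [hp.sq_apply_of_lt hn (by omega) (by omega), ← hb, show 2 * (b' + c') = b + c by omega]
    simp only [zero_add, Nat.sub_zero]
  have high : ∀ x y : Fin n, a ≤ x → a ≤ y → (x : ℕ) % 2 = y % 2 → p.SameCycle x y := by
    refine fun x y hx hy => p.sameCycle_of_sq_apply_eq (s := a) (m := b' + c') (e := b')
      (Nat.coprime_add_self_right.2 hcop.symm) (by omega) (fun z hz _ hzb => ?_) hx
      (by omega) hy (by omega)
    rw [hp.sq_apply_of_le hn hba (by omega) hz (by omega), ← hc,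
      show 2 * (b' + c') = b + c by omega]
  have to_mid : ∀ x z : Fin n, (z : ℕ) = a + x % 2 → p.SameCycle x z := fun x z hz =>
    if hx : (x : ℕ) < a + 2 then low _ _ hx (by omega) (by omega)
    else high _ _ (by omega) (by omega) (by omega)
  exact (to_mid x ⟨a + x % 2, by omega⟩ rfl).trans (to_mid y _ (by simp only [hxy])).symm

theorem stmt11_general (n a b c K : ℕ) (ha : 0 < a)
    (hba : b ≤ a) (haK : a = 2 * K) (hbcK : b + c = 2 * K + 2)
    (hbe : Even b) (hce : Even c) (hgcd : Nat.gcd b c = 2) (hn : n = a + b + c) :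
    ∃ p : Equiv.Perm (Fin n), IsTriplePerm n a b p ∧ IsCyclicPerm p := by
  obtain ⟨p, hp⟩ := exists_isTriplePerm (show a + b ≤ n by omega)
  refine ⟨p, hp, fun x y => Perm.SameCycle.exists_nat_pow_eq ?_⟩
  obtain ⟨b', rfl⟩ := hbe.two_dvd
  obtain ⟨c', rfl⟩ := hce.two_dvd
  have hcop : b'.Coprime c' := by
    rw [Nat.gcd_mul_left] at hgcd
    exact show b'.gcd c' = 1 by omega
  have parity : ∀ x y : Fin n, (x : ℕ) % 2 = y % 2 → p.SameCycle x y := fun _ _ =>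
    hp.sameCycle_of_mod_two_eq hn hba (by omega) rfl rfl hcop
  have edge : p.SameCycle ⟨0, by omega⟩ ⟨n - 1, by omega⟩ := by
    have : p ⟨0, by omega⟩ = ⟨n - 1, by omega⟩ := Fin.ext (by rw [hp]; simp [ha])
    exact this ▸ Perm.sameCycle_apply_right.2 .rfl
  have to_zero : ∀ x : Fin n, p.SameCycle x ⟨0, by omega⟩ := fun x =>
    if hx : (x : ℕ) % 2 = 0 then parity _ _ (by simpa using hx)
    else (parity x ⟨n - 1, by omega⟩ (by simp only; omega)).trans edge.symm
  exact (to_zero x).trans (to_zero y).symm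

theorem stmt11 (n a b c K : ℕ) (ha : 0 < a) (hb : 0 < b) (hc : 0 < c)
    (hba : b ≤ a) (hca : c ≤ a) (haK : a = 2 * K) (hbcK : b + c = 2 * K + 2)
    (hbe : Even b) (hce : Even c) (hgcd : Nat.gcd b c = 2) (hn : n = a + b + c) :
    ∃ p : Equiv.Perm (Fin n), IsTriplePerm n a b p ∧ IsCyclicPerm p :=
  stmt11_general n a b c K ha hba haK hbcK hbe hce hgcd hn
end
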